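/- arXiv:1012.5425 — 2 statements merged into one kernel-verified Lean document; each statement's English description precedes it below -/
import Mathlib

section
/- For every nonzero polynomial v in the ideal ⟨f_1,…,f_d⟩, there exists a TRB pair p such that lm(p) divides lm(v). Consequently the set of polynomial parts { v' : (u',v') is a TRB pair } is a Gröbner basis of ⟨f_1,…,f_d⟩ with respect to ≺_m. -/
namespace TRB

open MvPolynomial
open scoped Classical

/-- Monomials in the variables `x₁, …, xₙ`, identified with their exponent vectors;
a monomial `m₁` divides `m₂` iff the exponent vector of `m₁` is componentwise `≤`. -/
abbrev Mon (n : ℕ) := Fin n →₀ ℕ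

/-- Module monomials (signatures) `x^α E_i` of the free module `P^d`. -/
abbrev Sig (n d : ℕ) := Mon n × Fin d

/-- The action of a monomial on a module monomial: `m • (x^α E_i) = (m x^α) E_i`. -/
noncomputable def Sig.smul {n d : ℕ} (m : Mon n) (s : Sig n d) : Sig n d := (m + s.1, s.2)

/-- An admissible monomial order on the monomials of `P = K[x₁,…,xₙ]`:
a (strict) linear order such that `1 ⪯ m` for every monomial `m`, and
multiplication by a monomial is strictly monotone. -/
structure MonOrder (n : ℕ) where
  lt : Mon n → Mon n → Prop
  irrefl : ∀ a, ¬ lt a a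
  trans : ∀ a b c, lt a b → lt b c → lt a c
  total : ∀ a b, lt a b ∨ a = b ∨ lt b a
  zero_lt : ∀ a, a ≠ 0 → lt 0 a
  mul_lt_mul : ∀ (m a b : Mon n), lt a b → lt (m + a) (m + b)

/-- An admissible signature order on module monomials:
a (strict) linear order with `s ⪯ m • s` for every monomial `m`, and such that
multiplication by a monomial is strictly monotone. -/
structure SigOrder (n d : ℕ) where
  lt : Sig n d → Sig n d → Prop
  irrefl : ∀ s, ¬ lt s s
  trans : ∀ s t r, lt s t → lt t r → lt s r
  total : ∀ s t, lt s t ∨ s = t ∨ lt t s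
  le_smul : ∀ (m : Mon n) (s : Sig n d), s = Sig.smul m s ∨ lt s (Sig.smul m s)
  smul_lt_smul : ∀ (m : Mon n) (s t : Sig n d), lt s t → lt (Sig.smul m s) (Sig.smul m t)

/-- Non-strict version of a monomial order. -/
def MonOrder.le {n : ℕ} (mo : MonOrder n) (a b : Mon n) : Prop := mo.lt a b ∨ a = b

/-- Non-strict version of a signature order. -/
def SigOrder.le {n d : ℕ} (so : SigOrder n d) (s t : Sig n d) : Prop := so.lt s t ∨ s = t

/-- The `≺_m`-leading monomial of a polynomial (junk value `0` on the zero polynomial). -/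
noncomputable def MonOrder.lm {n : ℕ} {K : Type*} [CommSemiring K] (mo : MonOrder n)
    (v : MvPolynomial (Fin n) K) : Mon n :=
  if h : ∃ m ∈ v.support, ∀ m' ∈ v.support, m' ≠ m → mo.lt m' m then h.choose else 0

/-- The signature of a module element `u ∈ P^d`: the `≺_s`-largest module monomial
`x^α E_i` whose coefficient in `u` is nonzero (junk value on `u = 0`). -/
noncomputable def SigOrder.sig {n d : ℕ} [NeZero d] {K : Type*} [CommSemiring K]
    (so : SigOrder n d) (u : Fin d → MvPolynomial (Fin n) K) : Sig n d :=
  if h : ∃ s : Sig n d, (u s.2).coeff s.1 ≠ 0 ∧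
      ∀ t : Sig n d, (u t.2).coeff t.1 ≠ 0 → t ≠ s → so.lt t s
  then h.choose else (0, ⟨0, Nat.pos_of_ne_zero (NeZero.ne d)⟩)

/-- The ambient type of candidate pairs `(u, v) ∈ P^d × P`. -/
abbrev PairT (K : Type*) [CommSemiring K] (n d : ℕ) :=
  (Fin d → MvPolynomial (Fin n) K) × MvPolynomial (Fin n) K

variable {K : Type*} [Field K] {n d : ℕ}

/-- `(u, v)` is a pair (w.r.t. the input `f`) if `u ⬝ f = Σ_i u_i f_i = v`. -/
def IsPair (f : Fin d → MvPolynomial (Fin n) K) (p : PairT K n d) : Prop :=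
  ∑ i, p.1 i * f i = p.2

/-- Leading monomial of a pair: `lm p = lm v`. -/
noncomputable def lmP (mo : MonOrder n) (p : PairT K n d) : Mon n := mo.lm p.2

/-- Signature of a pair: `sig p = sig u`. -/
noncomputable def sigP [NeZero d] (so : SigOrder n d) (p : PairT K n d) : Sig n d :=
  so.sig p.1

/-- The pair order: `p ≺_p q` iff `lm(p)·sig(q) ≺_s lm(q)·sig(p)`. -/
def PairLt [NeZero d] (mo : MonOrder n) (so : SigOrder n d) (p q : PairT K n d) : Prop :=
  so.lt (Sig.smul (lmP mo p) (sigP so q)) (Sig.smul (lmP mo q) (sigP so p))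

/-- Pairs are similar if `lm(p)·sig(q) = lm(q)·sig(p)`. -/
def Similar [NeZero d] (mo : MonOrder n) (so : SigOrder n d) (p q : PairT K n d) : Prop :=
  Sig.smul (lmP mo p) (sigP so q) = Sig.smul (lmP mo q) (sigP so p)

/-- `p ⪯_p q`. -/
def PairLE [NeZero d] (mo : MonOrder n) (so : SigOrder n d) (p q : PairT K n d) : Prop :=
  PairLt mo so p q ∨ Similar mo so p q

/-- Pairs are equivalent if they have the same signature and the same leading monomial. -/
def Equivalent [NeZero d] (mo : MonOrder n) (so : SigOrder n d) (p q : PairT K n d) : Prop :=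
  sigP so p = sigP so q ∧ lmP mo p = lmP mo q

/-- `p` is top reducible by `q`: both non-syzygy, `p ≺_p q` and `lm(q) ∣ lm(p)`. -/
def TopRed [NeZero d] (mo : MonOrder n) (so : SigOrder n d) (p q : PairT K n d) : Prop :=
  p.2 ≠ 0 ∧ q.2 ≠ 0 ∧ PairLt mo so p q ∧ lmP mo q ≤ lmP mo p

/-- A TRP pair: a non-syzygy pair that is top reducible by no pair. -/
def IsTRP [NeZero d] (f : Fin d → MvPolynomial (Fin n) K) (mo : MonOrder n)
    (so : SigOrder n d) (p : PairT K n d) : Prop :=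
  IsPair f p ∧ p.2 ≠ 0 ∧ ∀ q : PairT K n d, IsPair f q → ¬ TopRed mo so p q

/-- Divisibility of signatures: `x^α E_i ∣ x^β E_j` iff `i = j` and `x^α ∣ x^β`. -/
def SigDvd {n d : ℕ} (s t : Sig n d) : Prop := s.2 = t.2 ∧ s.1 ≤ t.1

/-- A TRB pair: a TRP pair `p` such that no TRP pair similar to `p` has signature
properly dividing `sig p`. -/
def IsTRB [NeZero d] (f : Fin d → MvPolynomial (Fin n) K) (mo : MonOrder n)
    (so : SigOrder n d) (p : PairT K n d) : Prop :=
  IsTRP f mo so p ∧ ∀ q : PairT K n d, IsTRP f mo so q → Similar mo so p q →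
    SigDvd (sigP so q) (sigP so p) → sigP so q = sigP so p

/-- A signature is syzygy if it is the signature of a syzygy pair `(u, 0)`, `u ≠ 0`. -/
def IsSyzygySig [NeZero d] (f : Fin d → MvPolynomial (Fin n) K) (so : SigOrder n d)
    (s : Sig n d) : Prop :=
  ∃ u : Fin d → MvPolynomial (Fin n) K, u ≠ 0 ∧ IsPair f (u, 0) ∧ so.sig u = s

/-- The sub-order `≺_{s,i}` on monomials: `x^α ≺_{s,i} x^β` iff `x^α E_i ≺_s x^β E_i`. -/
def SubOrder {n d : ℕ} (so : SigOrder n d) (i : Fin d) (a b : Mon n) : Prop :=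
  so.lt (a, i) (b, i)

/-- The sub-order `≺_{s,i}` coincides with `≺_m`. -/
def EqOrders {n d : ℕ} (so : SigOrder n d) (mo : MonOrder n) (i : Fin d) : Prop :=
  ∀ a b : Mon n, SubOrder so i a b ↔ mo.lt a b

/-- `≺_m` and `≺_s` are almost compatible: either every sub-order `≺_{s,i}` coincides
with `≺_m`, or there is exactly one index `k` with `≺_{s,k} ≠ ≺_m`, and this `k`
satisfies `x^α E_k ≺_s E_i` for every monomial `x^α` and every index `i ≠ k`. -/
def AlmostCompatible {n d : ℕ} (mo : MonOrder n) (so : SigOrder n d) : Prop :=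
  (∀ i, EqOrders so mo i) ∨
  (∃ k, ¬ EqOrders so mo k ∧ (∀ i, i ≠ k → EqOrders so mo i) ∧
    ∀ (a : Mon n) (i : Fin d), i ≠ k → so.lt (a, k) ((0 : Mon n), i))

/-- `≺_m` and `≺_s` are compatible: `s₁ ⪯_s s₂` and `m₁ ⪯_m m₂` imply
`m₁·s₁ ⪯_s m₂·s₂`, with equality only when `s₁ = s₂` and `m₁ = m₂`. -/
def Compatible {n d : ℕ} (mo : MonOrder n) (so : SigOrder n d) : Prop :=
  ∀ (s₁ s₂ : Sig n d) (m₁ m₂ : Mon n), so.le s₁ s₂ → mo.le m₁ m₂ →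
    so.le (Sig.smul m₁ s₁) (Sig.smul m₂ s₂) ∧
    (Sig.smul m₁ s₁ = Sig.smul m₂ s₂ → s₁ = s₂ ∧ m₁ = m₂)

/-- The multiplied pair `m·p = (X^m · u, X^m · v)`. -/
noncomputable def mulPair (m : Mon n) (p : PairT K n d) : PairT K n d :=
  (fun i => monomial m (1 : K) * p.1 i, monomial m (1 : K) * p.2)

/-- `[m, p]` is the J-pair of the non-similar non-syzygy pairs `p₁, p₂`:
`p` is the `≺_p`-smaller of the two and `m·lm(p) = lcm(lm p₁, lm p₂)`. -/
def IsJPair [NeZero d] (mo : MonOrder n) (so : SigOrder n d) (p₁ p₂ : PairT K n d)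
    (m : Mon n) (p : PairT K n d) : Prop :=
  p₁.2 ≠ 0 ∧ p₂.2 ≠ 0 ∧ ¬ Similar mo so p₁ p₂ ∧
  ((PairLt mo so p₁ p₂ ∧ p = p₁) ∨ (PairLt mo so p₂ p₁ ∧ p = p₂)) ∧
  m + lmP mo p = lmP mo p₁ ⊔ lmP mo p₂

/-- `G` is a Gröbner basis of the ideal `⟨f₁,…,f_d⟩` w.r.t. `≺_m`: `G` consists of
elements of the ideal, and for every nonzero `v` in the ideal there is a nonzero
`g ∈ G` with `lm g ∣ lm v`. -/
def IsGroebnerBasis (mo : MonOrder n) (f : Fin d → MvPolynomial (Fin n) K)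
    (G : Set (MvPolynomial (Fin n) K)) : Prop :=
  (∀ g ∈ G, g ∈ Ideal.span (Set.range f)) ∧
  ∀ v ∈ Ideal.span (Set.range f), v ≠ 0 →
    ∃ g ∈ G, g ≠ 0 ∧ mo.lm g ≤ mo.lm v


/-! A nonzero `v` in the ideal is the polynomial part of a pair `(u, v)`. Among the non-syzygy
pairs `p` with `lm p ∣ lm v`, one whose signature scaled up to leading monomial `lm v`, namely
`(lm v / lm p) · sig p`, is `≺_s`-minimal is TRP: a pair top-reducing it would have a smaller
scaled signature. Such minima exist because `≺_s` is well-founded, being a linear extension of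
signature divisibility, which is a well-quasi-order by Dickson's lemma. Among the TRP pairs
with `lm p ∣ lm v`, one whose signature is minimal for divisibility is then TRB, since a similar
TRP pair of properly dividing signature has a leading monomial dividing `lm p`. -/

section SigOrder

variable {n d : ℕ} (so : SigOrder n d)

theorem Sig.smul_smul (a b : Mon n) (s : Sig n d) :
    Sig.smul a (Sig.smul b s) = Sig.smul (a + b) s := by
  simp only [Sig.smul, add_assoc]

theorem SigOrder.isStrictOrder : IsStrictOrder (Sig n d) so.lt where
  irrefl := so.irrefl
  trans := so.trans

theorem SigOrder.lt_of_smul_lt_smul {m : Mon n} {s t : Sig n d}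
    (h : so.lt (Sig.smul m s) (Sig.smul m t)) : so.lt s t := by
  rcases so.total s t with hst | rfl | hts
  · exact hst
  · exact absurd h (so.irrefl _)
  · exact absurd (so.trans _ _ _ h (so.smul_lt_smul m _ _ hts)) (so.irrefl _)

theorem SigOrder.not_lt_of_sigDvd {s t : Sig n d} (h : SigDvd s t) : ¬ so.lt t s := by
  obtain ⟨a, i⟩ := s
  obtain ⟨b, j⟩ := t
  obtain ⟨rfl, hab⟩ : i = j ∧ a ≤ b := h
  have hsmul : Sig.smul (b - a) (a, i) = (b, i) := by
    simp only [Sig.smul, tsub_add_cancel_of_le hab]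
  intro hlt
  have hle := so.le_smul (b - a) (a, i)
  rw [hsmul] at hle
  rcases hle with heq | hlt'
  · exact so.irrefl _ (heq ▸ hlt)
  · exact so.irrefl _ (so.trans _ _ _ hlt hlt')

theorem sigDvd_wellQuasiOrdered : WellQuasiOrdered (SigDvd : Sig n d → Sig n d → Prop) := by
  intro c
  obtain ⟨i, j, hij, hle, heq⟩ := (wellQuasiOrdered_le.prod (Finite.wellQuasiOrdered (· = ·))) c
  exact ⟨i, j, hij, heq, hle⟩

theorem SigOrder.wellFounded : WellFounded so.lt := by
  have := so.isStrictOrder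
  refine RelEmbedding.wellFounded_iff_isEmpty.2 ⟨fun c => ?_⟩
  obtain ⟨i, j, hij, hdvd⟩ := sigDvd_wellQuasiOrdered c
  exact so.not_lt_of_sigDvd hdvd (c.map_rel_iff.2 hij)

end SigOrder

section Pairs

variable {K : Type*} [Field K] {n d : ℕ} {f : Fin d → MvPolynomial (Fin n) K}

theorem IsPair.mem_span {p : PairT K n d} (h : IsPair f p) : p.2 ∈ Ideal.span (Set.range f) :=
  h ▸ Ideal.mem_span_range_iff_exists_fun.2 ⟨p.1, rfl⟩

variable [NeZero d] {mo : MonOrder n} {so : SigOrder n d}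

theorem sig_smul_lt_of_pairLt {p q : PairT K n d} {a b : Mon n}
    (hab : a + lmP mo p = b + lmP mo q) (h : PairLt mo so p q) :
    so.lt (Sig.smul b (sigP so q)) (Sig.smul a (sigP so p)) := by
  refine so.lt_of_smul_lt_smul (m := a + lmP mo p) ?_
  have key := so.smul_lt_smul (a + b) _ _ h
  rw [Sig.smul_smul, Sig.smul_smul] at key ⊢
  rwa [show a + b + lmP mo p = a + lmP mo p + b by abel,
    show a + b + lmP mo q = b + lmP mo q + a by abel, ← hab] at key

theorem lmP_le_of_similar {p q : PairT K n d} (hsim : Similar mo so p q)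
    (hdvd : SigDvd (sigP so q) (sigP so p)) : lmP mo q ≤ lmP mo p := by
  refine le_of_add_le_add_right (a := (sigP so p).1) ?_
  calc lmP mo q + (sigP so p).1 = lmP mo p + (sigP so q).1 := (congrArg Prod.fst hsim).symm
    _ ≤ lmP mo p + (sigP so p).1 := by gcongr; exact hdvd.2

theorem exists_isTRP_lmP_le {w : Mon n} {p₀ : PairT K n d} (h₀ : IsPair f p₀) (h₀0 : p₀.2 ≠ 0)
    (h₀w : lmP mo p₀ ≤ w) : ∃ p, IsTRP f mo so p ∧ lmP mo p ≤ w := by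
  obtain ⟨p, ⟨hp, hp0, hpw⟩, hmin⟩ :=
    (InvImage.wf (fun p : PairT K n d => Sig.smul (w - lmP mo p) (sigP so p))
      so.wellFounded).has_min {p | IsPair f p ∧ p.2 ≠ 0 ∧ lmP mo p ≤ w} ⟨p₀, h₀, h₀0, h₀w⟩
  refine ⟨p, ⟨hp, hp0, fun q hq ⟨_, hq0, hlt, hqp⟩ => hmin q ⟨hq, hq0, hqp.trans hpw⟩ ?_⟩, hpw⟩
  refine sig_smul_lt_of_pairLt ?_ hlt
  rw [tsub_add_cancel_of_le hpw, tsub_add_cancel_of_le (hqp.trans hpw)]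

theorem exists_isTRB_lmP_le {w : Mon n} {p₀ : PairT K n d} (h₀ : IsTRP f mo so p₀)
    (h₀w : lmP mo p₀ ≤ w) : ∃ p, IsTRB f mo so p ∧ lmP mo p ≤ w := by
  obtain ⟨p, ⟨hp, hpw⟩, hmin⟩ :=
    (InvImage.wf (fun p : PairT K n d => (sigP so p).1) wellFounded_lt).has_min
      {p | IsTRP f mo so p ∧ lmP mo p ≤ w} ⟨p₀, h₀, h₀w⟩
  refine ⟨p, ⟨hp, fun q hq hsim hdvd => ?_⟩, hpw⟩
  by_contra hne
  exact hmin q ⟨hq, (lmP_le_of_similar hsim hdvd).trans hpw⟩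
    (lt_of_le_of_ne hdvd.2 fun h => hne (Prod.ext h hdvd.1))

end Pairs

/-- For every nonzero polynomial `v` in the ideal `⟨f₁,…,f_d⟩`, there exists
a TRB pair `p` such that `lm p` divides `lm v`. Consequently the set of polynomial parts
`{ v' : (u',v') is a TRB pair }` is a Gröbner basis of `⟨f₁,…,f_d⟩` w.r.t. `≺_m`. -/
theorem TRB_polys_groebnerBasis {K : Type*} [Field K] {n d : ℕ} [NeZero d]
    (mo : MonOrder n) (so : SigOrder n d) (f : Fin d → MvPolynomial (Fin n) K) :
    (∀ v : MvPolynomial (Fin n) K, v ∈ Ideal.span (Set.range f) → v ≠ 0 →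
      ∃ p : PairT K n d, IsTRB f mo so p ∧ lmP mo p ≤ mo.lm v) ∧
    IsGroebnerBasis mo f
      {v' : MvPolynomial (Fin n) K |
        ∃ u' : Fin d → MvPolynomial (Fin n) K, IsTRB f mo so (u', v')} := by
  have exists_TRB (v : MvPolynomial (Fin n) K) (hv : v ∈ Ideal.span (Set.range f)) (hv0 : v ≠ 0) :
      ∃ p : PairT K n d, IsTRB f mo so p ∧ lmP mo p ≤ mo.lm v := by
    obtain ⟨u, hu⟩ := Ideal.mem_span_range_iff_exists_fun.mp hv
    obtain ⟨p, hp, hpv⟩ := exists_isTRP_lmP_le (mo := mo) (so := so) (p₀ := (u, v)) hu hv0 le_rfl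
    exact exists_isTRB_lmP_le hp hpv
  refine ⟨exists_TRB, fun g ⟨u, hg⟩ => hg.1.1.mem_span, fun v hv hv0 => ?_⟩
  obtain ⟨⟨u, g⟩, hp, hpv⟩ := exists_TRB v hv hv0
  exact ⟨g, ⟨u, hp⟩, hp.1.2.1, hpv⟩

end TRB
end

section
/- Suppose the sub-order ≺_{s,k} coincides with ≺_m. If p_1 and p_2 are TRP pairs whose signatures both have index k, such that sig(p_1) divides sig(p_2) and lm(p_1) divides lm(p_2), then p_1 ∼ p_2. -/
namespace TRB

open MvPolynomial
open scoped Classical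

variable {K : Type*} [Field K] {n d : ℕ}

/-! If `p₂ ≺_p p₁`, then `p₂` is top reducible by `p₁`, since `lm p₁ ∣ lm p₂`.
If `p₁ ≺_p p₂`, write `sig p₂ = x^b · sig p₁`. Because `≺_{s,k}` is `≺_m`, the inequality
`p₁ ≺_p p₂` says exactly that `x^b · lm p₁ ≺_m lm p₂`. Subtracting from `p₂` the multiple of
`x^b · p₁` that cancels the leading term of its signature therefore gives a pair with the leading
monomial of `p₂` and a smaller signature, which top reduces `p₂`. -/

theorem _root_.Set.Finite.exists_greatest_of_isStrictTotalOrder {α : Type*}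
    {r : α → α → Prop} [IsStrictTotalOrder α r] {s : Set α} (hs : s.Finite) (hne : s.Nonempty) :
    ∃ m ∈ s, ∀ x ∈ s, x ≠ m → r x m := by
  classical
  let _ := linearOrderOfSTO r
  obtain ⟨m, hm, hmax⟩ := Set.exists_max_image s id hs hne
  exact ⟨m, hm, fun x hx hxm => (hmax x hx).resolve_left hxm⟩

theorem _root_.MvPolynomial.exists_eq_add_of_coeff_monomial_mul_ne_zero {σ R : Type*}
    [CommSemiring R] {b m : σ →₀ ℕ} {c : R} {p : MvPolynomial σ R}
    (h : coeff m (monomial b c * p) ≠ 0) : ∃ m', m = b + m' ∧ coeff m' p ≠ 0 := by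
  rw [coeff_monomial_mul'] at h
  split_ifs at h with hbm
  · exact ⟨m - b, (add_tsub_cancel_of_le hbm).symm, right_ne_zero_of_mul h⟩
  · exact absurd rfl h

instance MonOrder.isStrictTotalOrder (mo : MonOrder n) : IsStrictTotalOrder (Mon n) mo.lt where
  trichotomous a b hab hba := ((mo.total a b).resolve_left hab).resolve_right hba
  irrefl := mo.irrefl
  trans := mo.trans

instance SigOrder.isStrictTotalOrder (so : SigOrder n d) :
    IsStrictTotalOrder (Sig n d) so.lt where
  trichotomous s t hst hts := ((so.total s t).resolve_left hst).resolve_right hts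
  irrefl := so.irrefl
  trans := so.trans

namespace MonOrder

variable (mo : MonOrder n)

theorem lt_of_add_lt_add_left {m a b : Mon n} (h : mo.lt (m + a) (m + b)) : mo.lt a b := by
  rcases mo.total a b with hab | rfl | hba
  · exact hab
  · exact absurd h (mo.irrefl _)
  · exact absurd (mo.trans _ _ _ h (mo.mul_lt_mul m b a hba)) (mo.irrefl _)

theorem add_le_add_left (m : Mon n) {a b : Mon n} (h : mo.le a b) : mo.le (m + a) (m + b) :=
  h.imp (mo.mul_lt_mul m a b) (congrArg (m + ·))

theorem lt_of_le_of_lt {a b c : Mon n} (hab : mo.le a b) (hbc : mo.lt b c) : mo.lt a c :=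
  hab.elim (fun h => mo.trans a b c h hbc) (· ▸ hbc)

section

variable {R : Type*} [CommSemiring R]

theorem lm_isGreatest {v : MvPolynomial (Fin n) R} (hv : v ≠ 0) :
    mo.lm v ∈ v.support ∧ ∀ m ∈ v.support, m ≠ mo.lm v → mo.lt m (mo.lm v) := by
  have h : ∃ m ∈ v.support, ∀ m' ∈ v.support, m' ≠ m → mo.lt m' m :=
    v.support.finite_toSet.exists_greatest_of_isStrictTotalOrder
      (Finset.coe_nonempty.2 (support_nonempty.2 hv))
  rw [MonOrder.lm, dif_pos h]
  exact h.choose_spec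

theorem le_lm {v : MvPolynomial (Fin n) R} {m : Mon n} (hm : m ∈ v.support) :
    mo.le m (mo.lm v) := by
  have hv : v ≠ 0 := ne_zero_iff.2 ⟨m, mem_support_iff.1 hm⟩
  by_cases hne : m = mo.lm v
  · exact Or.inr hne
  · exact Or.inl ((mo.lm_isGreatest hv).2 m hm hne)

theorem lm_eq_of_isGreatest {v : MvPolynomial (Fin n) R} {m : Mon n} (hm : m ∈ v.support)
    (hmax : ∀ m' ∈ v.support, m' ≠ m → mo.lt m' m) : mo.lm v = m := by
  by_contra hne
  have hv : v ≠ 0 := ne_zero_iff.2 ⟨m, mem_support_iff.1 hm⟩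
  exact mo.irrefl _ (mo.lt_of_le_of_lt (mo.le_lm hm) (hmax _ (mo.lm_isGreatest hv).1 hne))

theorem le_add_lm_of_mem_support_monomial_mul {b m : Mon n} {c : R}
    {v : MvPolynomial (Fin n) R} (hm : m ∈ (monomial b c * v).support) :
    mo.le m (b + mo.lm v) := by
  obtain ⟨m', rfl, hm'⟩ := exists_eq_add_of_coeff_monomial_mul_ne_zero (mem_support_iff.1 hm)
  exact mo.add_le_add_left b (mo.le_lm (mem_support_iff.2 hm'))

end

theorem lm_sub_of_forall_lt {R : Type*} [CommRing R] {v w : MvPolynomial (Fin n) R}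
    (hv : v ≠ 0) (hw : ∀ m ∈ w.support, mo.lt m (mo.lm v)) :
    v - w ≠ 0 ∧ mo.lm (v - w) = mo.lm v := by
  obtain ⟨hlm, hmax⟩ := mo.lm_isGreatest hv
  have hlm_sub : mo.lm v ∈ (v - w).support := by
    have hw_lm : mo.lm v ∉ w.support := fun h => mo.irrefl _ (hw _ h)
    rw [mem_support_iff, coeff_sub, notMem_support_iff.1 hw_lm, sub_zero]
    exact mem_support_iff.1 hlm
  refine ⟨ne_zero_iff.2 ⟨_, mem_support_iff.1 hlm_sub⟩,
    mo.lm_eq_of_isGreatest hlm_sub fun m hm hne => ?_⟩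
  rcases Finset.mem_union.1 (support_sub (Fin n) v w hm) with hmv | hmw
  · exact hmax m hmv hne
  · exact hw m hmw

end MonOrder

namespace SigOrder

variable (so : SigOrder n d)

theorem smul_le_smul (m : Mon n) {s t : Sig n d} (h : so.le s t) :
    so.le (Sig.smul m s) (Sig.smul m t) :=
  h.imp (so.smul_lt_smul m s t) (congrArg (Sig.smul m))

variable [NeZero d]

section

variable {R : Type*} [CommSemiring R]

theorem sig_isGreatest {u : Fin d → MvPolynomial (Fin n) R} (hu : u ≠ 0) :
    (u (so.sig u).2).coeff (so.sig u).1 ≠ 0 ∧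
      ∀ t : Sig n d, (u t.2).coeff t.1 ≠ 0 → t ≠ so.sig u → so.lt t (so.sig u) := by
  have hfin : {t : Sig n d | (u t.2).coeff t.1 ≠ 0}.Finite :=
    (Set.finite_iUnion fun i =>
      (u i).support.finite_toSet.image fun m => ((m, i) : Sig n d)).subset fun t ht =>
        Set.mem_iUnion.2 ⟨t.2, t.1, mem_support_iff.2 ht, rfl⟩
  have hne : {t : Sig n d | (u t.2).coeff t.1 ≠ 0}.Nonempty := by
    obtain ⟨i, hi⟩ := Function.ne_iff.1 hu
    obtain ⟨m, hm⟩ := ne_zero_iff.1 hi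
    exact ⟨(m, i), hm⟩
  obtain ⟨s, hs, hmax⟩ := hfin.exists_greatest_of_isStrictTotalOrder (r := so.lt) hne
  have h : ∃ s : Sig n d, (u s.2).coeff s.1 ≠ 0 ∧
      ∀ t : Sig n d, (u t.2).coeff t.1 ≠ 0 → t ≠ s → so.lt t s := ⟨s, hs, hmax⟩
  rw [SigOrder.sig, dif_pos h]
  exact h.choose_spec

theorem le_sig {u : Fin d → MvPolynomial (Fin n) R} {t : Sig n d}
    (ht : (u t.2).coeff t.1 ≠ 0) : so.le t (so.sig u) := by
  have hu : u ≠ 0 := fun h => ht (by simp [h])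
  by_cases hne : t = so.sig u
  · exact Or.inr hne
  · exact Or.inl ((so.sig_isGreatest hu).2 t ht hne)

end

theorem sig_sub_monomial_smul_lt {R : Type*} [CommRing R]
    {u₁ u₂ : Fin d → MvPolynomial (Fin n) R} {b : Mon n} {c : R} (hne : u₂ - monomial b c • u₁ ≠ 0)
    (hb : Sig.smul b (so.sig u₁) = so.sig u₂)
    (hc : c * (u₁ (so.sig u₁).2).coeff (so.sig u₁).1 = (u₂ (so.sig u₂).2).coeff (so.sig u₂).1) :
    so.lt (so.sig (u₂ - monomial b c • u₁)) (so.sig u₂) := by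
  set t := so.sig (u₂ - monomial b c • u₁)
  have ht : (u₂ t.2).coeff t.1 - (monomial b c * u₁ t.2).coeff t.1 ≠ 0 := by
    simpa only [Pi.sub_apply, Pi.smul_apply, smul_eq_mul, coeff_sub] using
      (so.sig_isGreatest hne).1
  have hts : t ≠ so.sig u₂ := by
    intro h
    rw [h, ← hb] at ht
    rw [← hb] at hc
    exact ht (by rw [sub_eq_zero, ← hc]; exact (coeff_monomial_mul _ _ _ _).symm)
  refine (?_ : so.le t (so.sig u₂)).resolve_right hts
  by_cases h₂ : (u₂ t.2).coeff t.1 = 0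
  · rw [h₂, zero_sub, neg_ne_zero] at ht
    obtain ⟨m', hm, hm'⟩ := exists_eq_add_of_coeff_monomial_mul_ne_zero ht
    have ht_eq : Sig.smul b (m', t.2) = t := Prod.ext hm.symm rfl
    rw [← ht_eq, ← hb]
    exact so.smul_le_smul b (so.le_sig (t := (m', t.2)) hm')
  · exact so.le_sig h₂

end SigOrder

section Pairs

variable {f : Fin d → MvPolynomial (Fin n) K} {p₁ p₂ : PairT K n d}

theorem IsPair.sub_smul (hp₁ : IsPair f p₁) (hp₂ : IsPair f p₂) (a : MvPolynomial (Fin n) K) :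
    IsPair f (p₂ - a • p₁) := by
  unfold IsPair at *
  simp only [Prod.fst_sub, Prod.snd_sub, Prod.smul_fst, Prod.smul_snd, Pi.sub_apply,
    Pi.smul_apply, smul_eq_mul, sub_mul, mul_assoc, Finset.sum_sub_distrib, ← Finset.mul_sum,
    hp₁, hp₂]

theorem IsPair.fst_ne_zero (hp : IsPair f p₁) (hv : p₁.2 ≠ 0) : p₁.1 ≠ 0 :=
  fun hu => hv (by rw [← hp, hu]; simp)

variable [NeZero d] {mo : MonOrder n} {so : SigOrder n d} {k : Fin d}

theorem PairLt.sub_add_lmP_lt_lmP (hk : EqOrders so mo k) (hi : (sigP so p₂).2 = k)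
    (hsd : SigDvd (sigP so p₁) (sigP so p₂)) (hlt : PairLt mo so p₁ p₂) :
    mo.lt ((sigP so p₂).1 - (sigP so p₁).1 + lmP mo p₁) (lmP mo p₂) := by
  set b := (sigP so p₂).1 - (sigP so p₁).1
  have hb : b + (sigP so p₁).1 = (sigP so p₂).1 := tsub_add_cancel_of_le hsd.2
  have e₁ : Sig.smul (lmP mo p₁) (sigP so p₂) = (lmP mo p₁ + (sigP so p₂).1, k) := Prod.ext rfl hi
  have e₂ : Sig.smul (lmP mo p₂) (sigP so p₁) = (lmP mo p₂ + (sigP so p₁).1, k) :=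
    Prod.ext rfl (hsd.1.trans hi)
  have hlt_k : SubOrder so k (lmP mo p₁ + (sigP so p₂).1) (lmP mo p₂ + (sigP so p₁).1) := by
    rwa [PairLt, e₁, e₂] at hlt
  refine mo.lt_of_add_lt_add_left (m := (sigP so p₁).1) ?_
  rw [← hb] at hlt_k
  convert (hk _ _).1 hlt_k using 1 <;> abel

theorem exists_topRed_of_pairLt (hk : EqOrders so mo k) (hp₁ : IsPair f p₁) (hv₁ : p₁.2 ≠ 0)
    (hp₂ : IsPair f p₂) (hv₂ : p₂.2 ≠ 0) (hi : (sigP so p₂).2 = k)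
    (hsd : SigDvd (sigP so p₁) (sigP so p₂)) (hlt : PairLt mo so p₁ p₂) :
    ∃ q, IsPair f q ∧ TopRed mo so p₂ q := by
  set s₁ := sigP so p₁
  set s₂ := sigP so p₂
  set b := s₂.1 - s₁.1
  set q := p₂ - monomial b ((p₂.1 s₂.2).coeff s₂.1 / (p₁.1 s₁.2).coeff s₁.1) • p₁
  have hq : IsPair f q := hp₁.sub_smul hp₂ _
  have hlm_lt : mo.lt (b + lmP mo p₁) (lmP mo p₂) := hlt.sub_add_lmP_lt_lmP hk hi hsd
  obtain ⟨hqv, hq_lm⟩ : q.2 ≠ 0 ∧ lmP mo q = lmP mo p₂ :=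
    mo.lm_sub_of_forall_lt hv₂ fun m hm =>
      mo.lt_of_le_of_lt (mo.le_add_lm_of_mem_support_monomial_mul hm) hlm_lt
  have hq_sig : so.lt (sigP so q) s₂ :=
    so.sig_sub_monomial_smul_lt (hq.fst_ne_zero hqv)
      (Prod.ext (tsub_add_cancel_of_le hsd.2) hsd.1)
      (div_mul_cancel₀ _ (so.sig_isGreatest (hp₁.fst_ne_zero hv₁)).1)
  refine ⟨q, hq, hv₂, hqv, ?_, hq_lm.le⟩
  show so.lt (Sig.smul (lmP mo p₂) (sigP so q)) (Sig.smul (lmP mo q) s₂)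
  rw [hq_lm]
  exact so.smul_lt_smul _ _ _ hq_sig

end Pairs

theorem TRP_dvd_similar_of_eqOrders_general {K : Type*} [Field K] {n d : ℕ} [NeZero d]
    (mo : MonOrder n) (so : SigOrder n d) (f : Fin d → MvPolynomial (Fin n) K)
    (k : Fin d) (hk : EqOrders so mo k)
    (p₁ p₂ : PairT K n d) (h1 : IsTRP f mo so p₁) (h2 : IsTRP f mo so p₂)
    (hi2 : (sigP so p₂).2 = k)
    (hsd : SigDvd (sigP so p₁) (sigP so p₂)) (hld : lmP mo p₁ ≤ lmP mo p₂) :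
    Similar mo so p₁ p₂ := by
  obtain ⟨hp₁, hv₁, -⟩ := h1
  obtain ⟨hp₂, hv₂, hirred₂⟩ := h2
  rcases so.total (Sig.smul (lmP mo p₁) (sigP so p₂)) (Sig.smul (lmP mo p₂) (sigP so p₁)) with
    hlt | hsim | hgt
  · obtain ⟨q, hq, hred⟩ := exists_topRed_of_pairLt hk hp₁ hv₁ hp₂ hv₂ hi2 hsd hlt
    exact absurd hred (hirred₂ q hq)
  · exact hsim
  · exact absurd ⟨hv₂, hv₁, hgt, hld⟩ (hirred₂ p₁ hp₁)

/-- Suppose the sub-order `≺_{s,k}` coincides with `≺_m`. If `p₁` and `p₂`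
are TRP pairs whose signatures both have index `k`, such that `sig p₁` divides `sig p₂`
and `lm p₁` divides `lm p₂`, then `p₁ ∼ p₂`. -/
theorem TRP_dvd_similar_of_eqOrders {K : Type*} [Field K] {n d : ℕ} [NeZero d]
    (mo : MonOrder n) (so : SigOrder n d) (f : Fin d → MvPolynomial (Fin n) K)
    (k : Fin d) (hk : EqOrders so mo k)
    (p₁ p₂ : PairT K n d) (h1 : IsTRP f mo so p₁) (h2 : IsTRP f mo so p₂)
    (hi1 : (sigP so p₁).2 = k) (hi2 : (sigP so p₂).2 = k)
    (hsd : SigDvd (sigP so p₁) (sigP so p₂)) (hld : lmP mo p₁ ≤ lmP mo p₂) :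
    Similar mo so p₁ p₂ :=
  TRP_dvd_similar_of_eqOrders_general mo so f k hk p₁ p₂ h1 h2 hi2 hsd hld

end TRB
end
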